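/- arXiv:2509.24390 — 4 statements merged into one kernel-verified Lean document; each statement's English description precedes it below -/
import Mathlib

section
/- Let H = H_X + H_Z be a Hamiltonian on n qubits where all terms pairwise commute, H_X = Σ_i h_{X,i} with each h_{X,i} a projector diagonal in the Hadamard basis, and H_Z = Σ_j h_{Z,j} with each h_{Z,j} a projector diagonal in the standard basis. If there exist bit strings x*, z* ∈ {0,1}^n with H_X H^{⊗n}|x*⟩ = 0 and H_Z |z*⟩ = 0, then H has a zero-energy ground state (i.e., a nonzero state ψ with H ψ = 0). -/
/-- The `n`-qubit Hadamard transform `H^{⊗n}`, as a matrix indexed by bit strings: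
`(H^{⊗n})_{x z} = 2^{-n/2} (-1)^{x·z}`. -/
noncomputable def hadamardN (n : ℕ) : Matrix (Fin n → Bool) (Fin n → Bool) ℂ :=
  fun x z =>
    ((1 / Real.sqrt 2 : ℝ) : ℂ) ^ n *
      (-1 : ℂ) ^ (Finset.univ.filter (fun i => x i = true ∧ z i = true)).card

/-- The standard basis state `|z⟩` of `n` qubits, as a vector indexed by bit strings. -/
def ketN {n : ℕ} (z : Fin n → Bool) : (Fin n → Bool) → ℂ :=
  fun w => if w = z then 1 else 0

open Matrix

lemma sum_mulVec' {ι N : Type*} [Fintype N] (s : Finset ι)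
    (A : ι → Matrix N N ℂ) (v : N → ℂ) :
    (∑ i ∈ s, A i).mulVec v = ∑ i ∈ s, (A i).mulVec v := by
  classical
  induction s using Finset.induction_on with
  | empty => simp
  | @insert j t hj ih => rw [Finset.sum_insert hj, Matrix.add_mulVec, ih, Finset.sum_insert hj]

lemma dotProduct_sum' {ι N : Type*} [Fintype N] (s : Finset ι)
    (v : N → ℂ) (f : ι → N → ℂ) :
    v ⬝ᵥ (∑ i ∈ s, f i) = ∑ i ∈ s, v ⬝ᵥ f i := by
  classical
  induction s using Finset.induction_on with
  | empty => simp
  | @insert j t hj ih => rw [Finset.sum_insert hj, dotProduct_add, ih, Finset.sum_insert hj]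

-- each projector in a sum annihilates v if the sum does
lemma proj_sum_zero {ι N : Type*} [Fintype ι] [Fintype N] [DecidableEq N]
    (p : ι → Matrix N N ℂ) (hp : ∀ i, (p i).IsHermitian ∧ p i * p i = p i)
    (v : N → ℂ) (h : (∑ i, p i).mulVec v = 0) : ∀ i, (p i).mulVec v = 0 := by
  have key : ∀ i, star v ⬝ᵥ (p i).mulVec v
      = ((∑ k, Complex.normSq ((p i).mulVec v k) : ℝ) : ℂ) := by
    intro i
    have h1 : (p i).mulVec v = (p i).mulVec ((p i).mulVec v) := by
      rw [mulVec_mulVec, (hp i).2]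
    have h2 : vecMul (star v) (p i) = star ((p i).mulVec v) := by
      rw [star_mulVec, (hp i).1]
    calc star v ⬝ᵥ (p i).mulVec v
        = star v ⬝ᵥ (p i).mulVec ((p i).mulVec v) := by rw [← h1]
      _ = vecMul (star v) (p i) ⬝ᵥ (p i).mulVec v := by rw [dotProduct_mulVec]
      _ = star ((p i).mulVec v) ⬝ᵥ (p i).mulVec v := by rw [h2]
      _ = ((∑ k, Complex.normSq ((p i).mulVec v k) : ℝ) : ℂ) := by
          simp [dotProduct, Complex.normSq_eq_conj_mul_self]
  have hsum0 : ∑ i, star v ⬝ᵥ (p i).mulVec v = 0 := by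
    rw [← dotProduct_sum', ← sum_mulVec', h, dotProduct_zero]
  have hsumR : (∑ i, ∑ k, Complex.normSq ((p i).mulVec v k)) = 0 := by
    rw [Finset.sum_congr rfl (fun i _ => key i)] at hsum0
    exact_mod_cast hsum0
  intro i
  have hi : (∑ k, Complex.normSq ((p i).mulVec v k)) = 0 := by
    have := (Finset.sum_eq_zero_iff_of_nonneg (fun i _ =>
      Finset.sum_nonneg (fun k _ => Complex.normSq_nonneg _))).mp hsumR i (Finset.mem_univ i)
    exact this
  funext k
  have := (Finset.sum_eq_zero_iff_of_nonneg (fun k _ => Complex.normSq_nonneg _)).mp hi k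
    (Finset.mem_univ k)
  exact Complex.normSq_eq_zero.mp this

/-- Let `H = H_X + H_Z` with all terms pairwise commuting projectors, the
`h_{X,i}` diagonal in the Hadamard basis and the `h_{Z,j}` diagonal in the standard basis.
If there are bit strings `x*, z*` with `H_X H^{⊗n}|x*⟩ = 0` and `H_Z |z*⟩ = 0`, then `H` has a
nonzero state `ψ` with `H ψ = 0`. -/
theorem stmt9 (n mX mZ : ℕ)
    (hX : Fin mX → Matrix (Fin n → Bool) (Fin n → Bool) ℂ)
    (hZ : Fin mZ → Matrix (Fin n → Bool) (Fin n → Bool) ℂ)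
    (hXproj : ∀ i, (hX i).IsHermitian ∧ hX i * hX i = hX i)
    (hZproj : ∀ j, (hZ j).IsHermitian ∧ hZ j * hZ j = hZ j)
    (hXdiag : ∀ i, (hadamardN n * hX i * hadamardN n).IsDiag)
    (hZdiag : ∀ j, (hZ j).IsDiag)
    (hcommXX : ∀ i i', Commute (hX i) (hX i'))
    (hcommZZ : ∀ j j', Commute (hZ j) (hZ j'))
    (hcommXZ : ∀ i j, Commute (hX i) (hZ j))
    (xstar zstar : Fin n → Bool)
    (hx : (∑ i, hX i).mulVec ((hadamardN n).mulVec (ketN xstar)) = 0)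
    (hz : (∑ j, hZ j).mulVec (ketN zstar) = 0) :
    ∃ ψ : (Fin n → Bool) → ℂ, ψ ≠ 0 ∧
      ((∑ i, hX i) + ∑ j, hZ j).mulVec ψ = 0 := by
  classical
  set u : (Fin n → Bool) → ℂ := (hadamardN n).mulVec (ketN xstar) with hu
  -- diagonal entries of hZ
  set d : Fin mZ → (Fin n → Bool) → ℂ := fun j w => hZ j w w with hd
  have hZeq : ∀ j, hZ j = Matrix.diagonal (d j) := fun j => ((hZdiag j).diagonal_diag).symm
  have hd01 : ∀ j w, d j w * d j w = d j w := by
    intro j w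
    have := congrFun (congrFun (hZproj j).2 w) w
    rw [hZeq j] at this
    simpa [Matrix.mul_apply, Matrix.diagonal_apply] using this
  -- the projector Π onto ker H_Z, as a diagonal matrix
  set P : Matrix (Fin n → Bool) (Fin n → Bool) ℂ :=
    Matrix.diagonal (fun w => ∏ j, (1 - d j w)) with hP
  -- each hX i annihilates u
  have hxi : ∀ i, (hX i).mulVec u = 0 := proj_sum_zero hX hXproj u hx
  -- each hZ j annihilates ket zstar, so d j zstar = 0
  have hzj : ∀ j, (hZ j).mulVec (ketN zstar) = 0 := proj_sum_zero hZ hZproj _ hz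
  have hdz : ∀ j, d j zstar = 0 := by
    intro j
    have := congrFun (hzj j) zstar
    rw [hZeq j] at this
    simpa [Matrix.mulVec_diagonal, ketN] using this
  -- P commutes with each hX i
  have hcommP : ∀ i, Commute (hX i) P := by
    intro i
    have : ∀ s : Finset (Fin mZ),
        Commute (hX i) (Matrix.diagonal (fun w => ∏ j ∈ s, (1 - d j w))) := by
      intro s
      induction s using Finset.induction_on with
      | empty => simpa using Commute.one_right (hX i)
      | @insert j s hj ih =>
        have hsplit : Matrix.diagonal (fun w => ∏ k ∈ insert j s, (1 - d k w))
            = (1 - hZ j) * Matrix.diagonal (fun w => ∏ k ∈ s, (1 - d k w)) := by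
          rw [hZeq j]
          ext w w'
          by_cases h : w = w' <;>
            simp [Matrix.mul_apply, Matrix.diagonal_apply, h, Finset.prod_insert hj, sub_mul]
        rw [hsplit]
        exact Commute.mul_right ((Commute.one_right (hX i)).sub_right (hcommXZ i j)) ih
    exact this Finset.univ
  -- hZ j * P = 0
  have hZP : ∀ j, hZ j * P = 0 := by
    intro j
    rw [hZeq j, hP]
    ext w w'
    by_cases h : w = w'
    · subst h
      have : d j w * ∏ k, (1 - d k w) = 0 := by
        rw [← Finset.mul_prod_erase Finset.univ _ (Finset.mem_univ j), ← mul_assoc,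
          mul_sub, mul_one, hd01 j w, sub_self, zero_mul]
      simpa [Matrix.mul_apply, Matrix.diagonal_apply] using this
    · simp [Matrix.mul_apply, Matrix.diagonal_apply, h]
  refine ⟨P.mulVec u, ?_, ?_⟩
  · -- nonzero: evaluate at zstar
    intro h0
    have hval := congrFun h0 zstar
    rw [hP] at hval
    simp only [Matrix.mulVec_diagonal] at hval
    have hprod : (∏ j, (1 - d j zstar)) = 1 := by
      apply Finset.prod_eq_one; intro j _; rw [hdz j]; ring
    rw [hprod, one_mul] at hval
    -- u zstar = hadamardN n zstar xstar ≠ 0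
    have huval : u zstar = hadamardN n zstar xstar := by
      simp [hu, Matrix.mulVec, dotProduct, ketN]
    rw [huval] at hval
    have : hadamardN n zstar xstar ≠ 0 := by
      unfold hadamardN
      apply mul_ne_zero
      · apply pow_ne_zero
        simp only [ne_eq, one_div, Complex.ofReal_eq_zero, inv_eq_zero]
        positivity
      · apply pow_ne_zero; norm_num
    exact this hval
  · -- H ψ = 0
    rw [Matrix.add_mulVec]
    have hXpart : (∑ i, hX i).mulVec (P.mulVec u) = 0 := by
      rw [sum_mulVec']
      apply Finset.sum_eq_zero
      intro i _
      rw [mulVec_mulVec, (hcommP i).eq, ← mulVec_mulVec, hxi i, mulVec_zero]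
    have hZpart : (∑ j, hZ j).mulVec (P.mulVec u) = 0 := by
      rw [sum_mulVec']
      apply Finset.sum_eq_zero
      intro j _
      rw [mulVec_mulVec, hZP j, zero_mulVec]
    rw [hXpart, hZpart, add_zero]
end

section
/- The controlled-Toffoli gate Γ(CCX) on control qubits i, j, k and target qubit l can be exactly implemented with one ancilla qubit a (in arbitrary state, returned unchanged) via the identity Γ(CCX)_{i,j,k,l} ⊗ I_a = CCX_{i,j,a} CCX_{k,a,l} CCX_{i,j,a} CCX_{k,a,l}. -/
/-- The Toffoli gate `CCX` with controls `i, j` and target `k`, as a matrix on five qubits. -/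
def CCXmat (i j k : Fin 5) : Matrix (Fin 5 → Bool) (Fin 5 → Bool) ℂ :=
  fun v w => if v = Function.update w k (xor (w k) (w i && w j)) then 1 else 0

/-- The controlled-Toffoli gate `Γ(CCX)` with controls `i, j, k` and target `l`, as a matrix on
five qubits (it acts as the identity on the remaining ancilla qubit). -/
def CCCXmat (i j k l : Fin 5) : Matrix (Fin 5 → Bool) (Fin 5 → Bool) ℂ :=
  fun v w => if v = Function.update w l (xor (w l) (w i && w j && w k)) then 1 else 0

/-- The matrix of a classical reversible map `F` on five qubits. -/
def Mof (F : (Fin 5 → Bool) → (Fin 5 → Bool)) : Matrix (Fin 5 → Bool) (Fin 5 → Bool) ℂ :=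
  fun v w => if v = F w then 1 else 0

lemma permmul (F G : (Fin 5 → Bool) → (Fin 5 → Bool)) : Mof F * Mof G = Mof (F ∘ G) := by
  funext v w
  show ∑ x, Mof F v x * Mof G x w = _
  unfold Mof
  simp only [ite_mul, one_mul, zero_mul, ← ite_and]
  have h : ∀ x, (if v = F x ∧ x = G w then (1:ℂ) else 0) = if x = G w ∧ v = F x then 1 else 0 :=
    fun x => if_congr and_comm rfl rfl
  rw [Finset.sum_congr rfl (fun x _ => h x)]
  simp only [ite_and]
  rw [Finset.sum_ite_eq' Finset.univ (G w) (fun x => if v = F x then (1:ℂ) else 0)]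
  simp [Function.comp]

set_option linter.unnecessarySeqFocus false in
/-- `Γ(CCX)_{i,j,k,l} ⊗ I_a = CCX_{i,j,a} CCX_{k,a,l} CCX_{i,j,a} CCX_{k,a,l}`
for pairwise distinct qubits `i, j, k, l, a`. -/
theorem stmt11 (i j k l a : Fin 5)
    (hdist : [i, j, k, l, a].Pairwise (· ≠ ·)) :
    CCCXmat i j k l = CCXmat i j a * CCXmat k a l * CCXmat i j a * CCXmat k a l := by
  simp only [List.pairwise_cons, List.mem_cons, List.mem_singleton, List.not_mem_nil] at hdist
  obtain ⟨hi, hj, hk, hl, -⟩ := hdist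
  have hia := hi a (Or.inr (Or.inr (Or.inr (Or.inl rfl))))
  have hil := hi l (Or.inr (Or.inr (Or.inl rfl)))
  have hja := hj a (Or.inr (Or.inr (Or.inl rfl)))
  have hjl := hj l (Or.inr (Or.inl rfl))
  have hka := hk a (Or.inr (Or.inl rfl))
  have hkl := hk l (Or.inl rfl)
  have hla := hl a (Or.inl rfl)
  have e1 : CCXmat i j a = Mof (fun w => Function.update w a (xor (w a) (w i && w j))) := rfl
  have e2 : CCXmat k a l = Mof (fun w => Function.update w l (xor (w l) (w k && w a))) := rfl
  have e3 : CCCXmat i j k l = Mof (fun w => Function.update w l (xor (w l) (w i && w j && w k))) := rfl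
  rw [e1, e2, e3, permmul, permmul, permmul]
  refine congrArg Mof ?_
  funext w x
  simp only [Function.comp_apply, Function.update_apply]
  by_cases hxa : x = a <;> by_cases hxl : x = l <;>
    simp_all [Function.update_apply, hia.symm, hja.symm, hka.symm, hla, hla.symm, hil.symm,
      hjl.symm, hkl.symm] <;>
    cases w i <;> cases w j <;> cases w k <;> cases w l <;> cases w a <;> rfl
end

section
/- Consider strings over the alphabet obtained by interleaving: positions 1,3,...,T are in {0,1} and positions 2,4,...,T-1 are in {+,-}, with T = 2τ+1. Define the rewrite relation generated by the bidirectional rules: at the start, [0+ ↔ [1+; in the interior, 1+0 ↔ 1-0 (centered at an even position) and -0+ ↔ -1+ (centered at an odd position); at the end, -0] ↔ -1]. If a string s contains the substring '+1' at positions (k, k+1), then every string reachable from s by these rewrites also contains '+1' at positions (k, k+1); similarly, if s contains '0-' at positions (k, k+1), every reachable string contains '0-' at those positions. -/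
/-- One rewrite step on interleaved clock strings of length `T`. Strings are encoded as
`s : ℕ → Bool`, where even (0-indexed) positions carry the `{0,1}` symbols
(`false = 0`, `true = 1`) and odd positions carry the `{+,-}` symbols
(`false = +`, `true = -`). The rules are, in the paper's 1-indexed notation:
`[0+ ↔ [1+` at the start, `1+0 ↔ 1-0` and `-0+ ↔ -1+` in the interior, and
`-0] ↔ -1]` at the end. -/
def ClockStep (T : ℕ) (s t : ℕ → Bool) : Prop :=
  ∃ p, p < T ∧ t = Function.update s p (!(s p)) ∧
    ((p = 0 ∧ s 1 = false) ∨
     (0 < p ∧ p < T - 1 ∧ s (p - 1) = true ∧ s (p + 1) = false) ∨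
     (p = T - 1 ∧ 0 < p ∧ s (p - 1) = true))

lemma clock_key (T k : ℕ) (hk : k + 1 < T) (a b : ℕ → Bool)
    (h : ClockStep T a b ∨ ClockStep T b a)
    (h1 : a k = false) (h2 : a (k + 1) = true) :
    b k = false ∧ b (k + 1) = true := by
  rcases h with ⟨p, hp, heq, hcond⟩ | ⟨p, hp, heq, hcond⟩
  · subst heq
    rcases eq_or_ne p k with rfl | hpk
    · exfalso
      rcases hcond with ⟨rfl, hc⟩ | ⟨_, _, _, hc⟩ | ⟨hc, _, _⟩
      · rw [show (1:ℕ) = 0 + 1 from rfl, h2] at hc; simp at hc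
      · rw [h2] at hc; simp at hc
      · omega
    rcases eq_or_ne p (k + 1) with rfl | hpk1
    · exfalso
      rcases hcond with ⟨hc, _⟩ | ⟨_, _, hc, _⟩ | ⟨_, _, hc⟩
      · omega
      · simp only [Nat.add_sub_cancel] at hc; rw [h1] at hc; simp at hc
      · simp only [Nat.add_sub_cancel] at hc; rw [h1] at hc; simp at hc
    rw [Function.update_of_ne (by omega), Function.update_of_ne (by omega)]
    exact ⟨h1, h2⟩
  · rcases eq_or_ne p k with rfl | hpk
    · exfalso
      have hb1 : b (p + 1) = true := by
        rw [heq] at h2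
        rwa [Function.update_of_ne (by omega)] at h2
      rcases hcond with ⟨rfl, hc⟩ | ⟨_, _, _, hc⟩ | ⟨hc, _, _⟩
      · rw [show (1:ℕ) = 0 + 1 from rfl, hb1] at hc; simp at hc
      · rw [hb1] at hc; simp at hc
      · omega
    rcases eq_or_ne p (k + 1) with rfl | hpk1
    · exfalso
      have hb0 : b k = false := by
        rw [heq] at h1
        rwa [Function.update_of_ne (by omega)] at h1
      rcases hcond with ⟨hc, _⟩ | ⟨_, _, hc, _⟩ | ⟨_, _, hc⟩
      · omega
      · simp only [Nat.add_sub_cancel] at hc; rw [hb0] at hc; simp at hc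
      · simp only [Nat.add_sub_cancel] at hc; rw [hb0] at hc; simp at hc
    rw [heq] at h1 h2
    rw [Function.update_of_ne (by omega)] at h1
    rw [Function.update_of_ne (by omega)] at h2
    exact ⟨h1, h2⟩

/-- **locking lemma.** If `s` contains the pattern `+1` (at an odd/even pair of
positions) or the pattern `0-` (at an even/odd pair of positions) at positions `(k, k+1)` —
in both cases encoded as `s k = false` and `s (k+1) = true` — then every string reachable from
`s` under the reflexive-transitive-symmetric closure of the rewrite steps has the same pattern
at positions `(k, k+1)`. -/
theorem stmt18 (τ : ℕ) (hτ : 1 ≤ τ) (T : ℕ) (hT : T = 2 * τ + 1)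
    (s : ℕ → Bool) (k : ℕ) (hk : k + 1 ≤ T - 1)
    (hfalse : s k = false) (htrue : s (k + 1) = true)
    (t : ℕ → Bool)
    (ht : Relation.ReflTransGen (fun a b => ClockStep T a b ∨ ClockStep T b a) s t) :
    t k = false ∧ t (k + 1) = true := by
  induction ht with
  | refl => exact ⟨hfalse, htrue⟩
  | tail _ hstep ih => exact clock_key T k (by omega) _ _ hstep ih.1 ih.2
end

section
/- With the interleaved clock strings and rewrite relation as above, let S_format be the set of strings of the form interleave(1^{t_Z} 0^{τ+1-t_Z}, -^{t_X} +^{τ-t_X}) for 0 ≤ t_Z ≤ τ+1 and 0 ≤ t_X ≤ τ, let S_good ⊆ S_format be those with t_Z = t_X or t_Z = t_X + 1, and S_fake = S_format \ S_good. Then any two distinct strings f, g ∈ S_fake lie in different connected components of the rewrite relation (restricted to non-good strings). -/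
/-- `s` is the interleaving of the unary `Z`-clock string `1^{t_Z} 0^{τ+1-t_Z}` (even positions)
with the unary `X`-clock string `-^{t_X} +^{τ-t_X}` (odd positions), padded with `false`
beyond position `2τ`. -/
def IsFormat (τ : ℕ) (s : ℕ → Bool) (tZ tX : ℕ) : Prop :=
  tZ ≤ τ + 1 ∧ tX ≤ τ ∧
    (∀ p < 2 * τ + 1,
      (p % 2 = 0 → (s p = true ↔ p / 2 < tZ)) ∧
      (p % 2 = 1 → (s p = true ↔ p / 2 < tX))) ∧
    (∀ p, 2 * τ + 1 ≤ p → s p = false)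

/-- `s` is a good clock string: a format string whose two clocks are synchronized,
`t_Z = t_X` or `t_Z = t_X + 1`. -/
def InGood (τ : ℕ) (s : ℕ → Bool) : Prop :=
  ∃ tZ tX, IsFormat τ s tZ tX ∧ (tZ = tX ∨ tZ = tX + 1)

/-- `s` is a fake clock string: a format string that is not good. -/
def InFake (τ : ℕ) (s : ℕ → Bool) : Prop :=
  (∃ tZ tX, IsFormat τ s tZ tX) ∧ ¬ InGood τ s

/-- A "rise" of `s` at position `q`: the pattern `01` occurs at `(q, q+1)` inside the window
`[0, T)`. A single rewrite step can never create or destroy a rise, since it flips a bit whose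
left neighbour is `1` (or the left wall) and whose right neighbour is `0` (or the right wall). -/
def RiseIn (T : ℕ) (s : ℕ → Bool) (q : ℕ) : Prop :=
  q + 1 < T ∧ s q = false ∧ s (q + 1) = true

lemma step_rise {T : ℕ} {s t : ℕ → Bool} (h : ClockStep T s t) (q : ℕ) :
    RiseIn T s q ↔ RiseIn T t q := by
  obtain ⟨p, hp, ht, hc⟩ := h
  subst ht
  have hup : ∀ r, r ≠ p → Function.update s p (!(s p)) r = s r :=
    fun r hr => Function.update_of_ne hr _ _
  by_cases hq1 : q = p
  · subst hq1
    rcases hc with ⟨h0, h1⟩ | ⟨hp0, hpT, hl, hr⟩ | ⟨hpT, hp0, hl⟩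
    · subst h0
      simp [RiseIn, hup 1 (by omega), h1]
    · simp [RiseIn, hup (q+1) (by omega), hr]
    · constructor <;> rintro ⟨h1, _, _⟩ <;> omega
  · by_cases hq2 : q + 1 = p
    · have hqp : q ≠ p := by omega
      rcases hc with ⟨h0, h1⟩ | ⟨hp0, hpT, hl, hr⟩ | ⟨hpT, hp0, hl⟩
      · omega
      · have hq : s q = true := by rwa [show p - 1 = q by omega] at hl
        simp [RiseIn, hup q hqp, hq]
      · have hq : s q = true := by rwa [show p - 1 = q by omega] at hl
        simp [RiseIn, hup q hqp, hq]
    · simp [RiseIn, hup q (by omega), hup (q+1) (by omega)]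

/-- The rises of a format string with parameters `(tZ, tX)` are exactly the even positions
`2i` with `tZ ≤ i < tX` and the odd positions `2i+1` with `tX ≤ i` and `i + 1 < tZ`. -/
lemma format_rise {τ : ℕ} {s : ℕ → Bool} {tZ tX : ℕ} (h : IsFormat τ s tZ tX) (q : ℕ) :
    RiseIn (2*τ+1) s q ↔
      ((q % 2 = 0 ∧ tZ ≤ q / 2 ∧ q / 2 < tX) ∨
       (q % 2 = 1 ∧ tX ≤ q / 2 ∧ q / 2 + 1 < tZ)) := by
  obtain ⟨hZ, hX, hmid, htail⟩ := h
  constructor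
  · rintro ⟨hq, h0, h1⟩
    rcases Nat.mod_two_eq_zero_or_one q with hm | hm
    · have a := (hmid q (by omega)).1 hm
      have b := (hmid (q+1) (by omega)).2 (by omega)
      rw [h0] at a; rw [h1] at b; simp at b
      simp at a
      have e1 : (q+1)/2 = q/2 := by omega
      rw [e1] at b
      exact Or.inl ⟨hm, by omega, by omega⟩
    · have a := (hmid q (by omega)).2 hm
      have b := (hmid (q+1) (by omega)).1 (by omega)
      rw [h0] at a; rw [h1] at b; simp at b
      simp at a
      have e1 : (q+1)/2 = q/2 + 1 := by omega
      rw [e1] at b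
      exact Or.inr ⟨hm, by omega, by omega⟩
  · rintro (⟨hm, hlo, hhi⟩ | ⟨hm, hlo, hhi⟩)
    · have hq : q + 1 < 2*τ+1 := by omega
      have a := (hmid q (by omega)).1 hm
      have b := (hmid (q+1) (by omega)).2 (by omega)
      refine ⟨hq, ?_, ?_⟩
      · rcases hs : s q with _ | _
        · rfl
        · exact absurd (a.1 hs) (by omega)
      · refine b.2 ?_
        have e1 : (q+1)/2 = q/2 := by omega
        omega
    · have hq : q + 1 < 2*τ+1 := by omega
      have a := (hmid q (by omega)).2 hm
      have b := (hmid (q+1) (by omega)).1 (by omega)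
      refine ⟨hq, ?_, ?_⟩
      · rcases hs : s q with _ | _
        · rfl
        · exact absurd (a.1 hs) (by omega)
      · refine b.2 ?_
        have e1 : (q+1)/2 = q/2 + 1 := by omega
        omega

/-- A format string is determined by its parameters. -/
lemma format_ext {τ tZ tX : ℕ} {s s' : ℕ → Bool}
    (h : IsFormat τ s tZ tX) (h' : IsFormat τ s' tZ tX) : s = s' := by
  funext p
  by_cases hp : p < 2*τ+1
  · rcases Nat.mod_two_eq_zero_or_one p with hm | hm
    · have a := (h.2.2.1 p hp).1 hm
      have b := (h'.2.2.1 p hp).1 hm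
      cases hs : s p <;> cases hs' : s' p <;> simp_all <;> omega
    · have a := (h.2.2.1 p hp).2 hm
      have b := (h'.2.2.1 p hp).2 hm
      cases hs : s p <;> cases hs' : s' p <;> simp_all <;> omega
  · rw [h.2.2.2 p (by omega), h'.2.2.2 p (by omega)]

lemma path_rise {T : ℕ} {R : (ℕ → Bool) → (ℕ → Bool) → Prop}
    (hR : ∀ a b, R a b → ClockStep T a b ∨ ClockStep T b a)
    {f g : ℕ → Bool} (h : Relation.ReflTransGen R f g) (q : ℕ) :
    RiseIn T f q ↔ RiseIn T g q := by
  induction h with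
  | refl => exact Iff.rfl
  | tail _ hstep ih =>
    rcases hR _ _ hstep with hs | hs
    · exact ih.trans (step_rise hs q)
    · exact ih.trans (step_rise hs q).symm

/-- Any two distinct fake clock strings lie in different connected components
of the rewrite graph on non-good strings (single rewrite steps both of whose endpoints are
not good). -/
theorem stmt19 (τ : ℕ) (hτ : 1 ≤ τ) (f g : ℕ → Bool)
    (hf : InFake τ f) (hg : InFake τ g) (hfg : f ≠ g)
    (hconn : Relation.ReflTransGen
      (fun a b => (ClockStep (2 * τ + 1) a b ∨ ClockStep (2 * τ + 1) b a) ∧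
        ¬ InGood τ a ∧ ¬ InGood τ b) f g) :
    False := by
  obtain ⟨⟨tZf, tXf, hFf⟩, hGf⟩ := hf
  obtain ⟨⟨tZg, tXg, hFg⟩, hGg⟩ := hg
  -- the rise set is invariant along the whole path
  have hinv : ∀ q, RiseIn (2*τ+1) f q ↔ RiseIn (2*τ+1) g q :=
    path_rise (fun _ _ hr => hr.1) hconn
  -- translate via the format characterization of rises
  have key : ∀ q : ℕ,
      ((q % 2 = 0 ∧ tZf ≤ q / 2 ∧ q / 2 < tXf) ∨
       (q % 2 = 1 ∧ tXf ≤ q / 2 ∧ q / 2 + 1 < tZf)) ↔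
      ((q % 2 = 0 ∧ tZg ≤ q / 2 ∧ q / 2 < tXg) ∨
       (q % 2 = 1 ∧ tXg ≤ q / 2 ∧ q / 2 + 1 < tZg)) := by
    intro q
    exact (format_rise hFf q).symm.trans ((hinv q).trans (format_rise hFg q))
  -- fake means off-sync
  have hnf : ¬(tZf = tXf ∨ tZf = tXf + 1) := fun h => hGf ⟨tZf, tXf, hFf, h⟩
  have hng : ¬(tZg = tXg ∨ tZg = tXg + 1) := fun h => hGg ⟨tZg, tXg, hFg, h⟩
  -- for fake strings, the rise set determines the parameters
  have hcf : tZf < tXf ∨ tXf + 2 ≤ tZf := by omega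
  have hcg : tZg < tXg ∨ tXg + 2 ≤ tZg := by omega
  have heq : tZf = tZg ∧ tXf = tXg := by
    rcases hcf with hA | hB <;> rcases hcg with hA' | hB'
    · have h1 := key (2*tZf); have h2 := key (2*tXf - 2)
      have h5 := key (2*tZg); have h6 := key (2*tXg - 2)
      omega
    · have h1 := key (2*tZf); omega
    · have h5 := key (2*tZg); omega
    · have h3 := key (2*tXf + 1); have h4 := key (2*tZf - 3)
      have h7 := key (2*tXg + 1); have h8 := key (2*tZg - 3)
      omega
  obtain ⟨e1, e2⟩ := heq
  subst e1; subst e2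
  exact hfg (format_ext hFf hFg)
end
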